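/- Let $R$ be a Noetherian commutative ring, $\mathfrak{m} \subseteq R$ an ideal, and $x \in \mathfrak{m}$. Then $\sqrt{(x)} = \sqrt{(x :_R \mathfrak{m}^\infty) \cap \mathfrak{m}}$. -/

import Mathlib

namespace Ideal

variable {R : Type*} [CommSemiring R]

theorem monotone_colon_pow (I m : Ideal R) :
    Monotone fun k : ℕ => I.colon ((m ^ k : Ideal R) : Set R) :=
  fun _ _ hkl => Submodule.colon_mono le_rfl (pow_le_pow_right hkl)

theorem pow_succ_mem_of_mem_colon_pow {I m : Ideal R} {k : ℕ} {r : R}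
    (hr : r ∈ I.colon ((m ^ k : Ideal R) : Set R)) (hrm : r ∈ m) : r ^ (k + 1) ∈ I := by
  rw [pow_succ']
  exact Submodule.mem_colon.mp hr _ (pow_mem_pow hrm k)

theorem iSup_colon_pow_inf_le_radical (I m : Ideal R) :
    (⨆ k : ℕ, I.colon ((m ^ k : Ideal R) : Set R)) ⊓ m ≤ I.radical := by
  rintro r ⟨hr, hrm⟩
  obtain ⟨k, hk⟩ := (Submodule.mem_iSup_of_chain ⟨_, monotone_colon_pow I m⟩ r).mp hr
  exact ⟨k + 1, pow_succ_mem_of_mem_colon_pow hk hrm⟩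

theorem radical_eq_radical_iSup_colon_pow_inf {I m : Ideal R} (hIm : I ≤ m) :
    I.radical = ((⨆ k : ℕ, I.colon ((m ^ k : Ideal R) : Set R)) ⊓ m).radical :=
  le_antisymm (radical_mono (le_inf (le_iSup_of_le 0 le_colon) hIm))
    (radical_le_radical_iff.mpr (iSup_colon_pow_inf_le_radical I m))

end Ideal

theorem radical_span_eq_radical_saturation_inf_general {R : Type*} [CommRing R]
    (m : Ideal R) (x : R) (hx : x ∈ m) :
    (Ideal.span {x}).radical =
      ((⨆ k : ℕ, (Ideal.span {x}).colon ((m ^ k : Ideal R) : Set R)) ⊓ m).radical :=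
  Ideal.radical_eq_radical_iSup_colon_pow_inf ((Ideal.span_singleton_le_iff_mem m).mpr hx)

/-- Let `R` be a Noetherian commutative ring, `m ⊆ R` an ideal, and `x ∈ m`.
Then `√(x) = √((x :_R m^∞) ⊓ m)`, where `(x :_R m^∞) = ⋃ k, (x :_R m^k)`. -/
theorem radical_span_eq_radical_saturation_inf {R : Type*} [CommRing R] [IsNoetherianRing R]
    (m : Ideal R) (x : R) (hx : x ∈ m) :
    (Ideal.span {x}).radical =
      ((⨆ k : ℕ, (Ideal.span {x}).colon ((m ^ k : Ideal R) : Set R)) ⊓ m).radical :=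
  radical_span_eq_radical_saturation_inf_general m x hx
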